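/- The complex algebra of polynomials in two variables x, y invariant under the order-24 subgroup of SU(2) generated by iX, iZ, and Q = (1/2)·[[1+i,1+i],[−1+i,1−i]] (acting linearly on (x,y)) is generated by I₆ = x⁵y − xy⁵, I₈ = x⁸ + 14x⁴y⁴ + y⁸, and I₁₂ = x¹² − 33x⁸y⁴ − 33x⁴y⁸ + y¹². -/

import Mathlib

open Matrix Complex MvPolynomial
noncomputable section

def iX : Matrix (Fin 2) (Fin 2) ℂ := !![0, I; I, 0]

def iZ : Matrix (Fin 2) (Fin 2) ℂ := !![I, 0; 0, -I]

def Qm : Matrix (Fin 2) (Fin 2) ℂ := (1 / 2 : ℂ) • !![1 + I, 1 + I; -1 + I, 1 - I]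

/-- The binary tetrahedral group: subgroup of `SU(2)` generated by `iX`, `iZ`, `Q`. -/
def W24 : Submonoid (Matrix (Fin 2) (Fin 2) ℂ) :=
  Submonoid.closure {iX, iZ, Qm}

/-- Action of a 2×2 matrix on polynomials in `x, y` by linear substitution. -/
def actP (g : Matrix (Fin 2) (Fin 2) ℂ) (p : MvPolynomial (Fin 2) ℂ) :
    MvPolynomial (Fin 2) ℂ :=
  MvPolynomial.aeval (fun i => ∑ j, MvPolynomial.C (g i j) * MvPolynomial.X j) p

def I6 : MvPolynomial (Fin 2) ℂ := X 0 ^ 5 * X 1 - X 0 * X 1 ^ 5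

def I8 : MvPolynomial (Fin 2) ℂ := X 0 ^ 8 + C 14 * X 0 ^ 4 * X 1 ^ 4 + X 1 ^ 8

def I12 : MvPolynomial (Fin 2) ℂ :=
  X 0 ^ 12 - C 33 * X 0 ^ 8 * X 1 ^ 4 - C 33 * X 0 ^ 4 * X 1 ^ 8 + X 1 ^ 12

/-!
Averaging over the quaternion group `Q₈ = ⟨iX, iZ⟩`, which scales each monomial and swaps
`x` with `y`, shows that every `Q₈`-invariant lies in `ℂ[t, u] ⊕ I₆ ℂ[t, u]`, where
`t = x⁴ + y⁴` and `u = x²y²`. The element `Q` fixes `I₆` and has the tetrahedral forms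
`Φ = t + (4ω + 2) u` and `Ψ = t + (4ω² + 2) u` (`ω` a primitive cube root of unity) as
eigenvectors with eigenvalues `ω` and `ω²`; these forms also generate `ℂ[t, u]`. Averaging over
`⟨Q⟩` therefore only keeps the monomials `Φʲ Ψᵏ` with `j ≡ k (mod 3)`, which are products of
`Φ³ = I₁₂ + 6(2ω + 1) I₆²`, `Ψ³ = I₁₂ - 6(2ω + 1) I₆²` and `ΦΨ = I₈`.
-/

section CyclicAverage

variable {K M : Type*} [Field K] [AddCommGroup M] [Module K M]

def cyclicAverage (T : Module.End K M) (n : ℕ) : Module.End K M :=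
  (n : K)⁻¹ • ∑ i ∈ Finset.range n, T ^ i

theorem cyclicAverage_apply (T : Module.End K M) (n : ℕ) (v : M) :
    cyclicAverage T n v = (n : K)⁻¹ • ∑ i ∈ Finset.range n, (T ^ i) v := by
  simp [cyclicAverage, LinearMap.sum_apply]

theorem cyclicAverage_apply_of_apply_eq_smul {T : Module.End K M} {n : ℕ} {ζ : K} {v : M}
    (hv : T v = ζ • v) :
    cyclicAverage T n v = ((n : K)⁻¹ * ∑ i ∈ Finset.range n, ζ ^ i) • v := by
  have hpow : ∀ i, (T ^ i) v = ζ ^ i • v := by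
    intro i
    induction i with
    | zero => simp
    | succ i ih => rw [pow_succ', Module.End.mul_apply, ih, map_smul, hv, smul_smul, pow_succ]
  simp [cyclicAverage_apply, hpow, Finset.sum_smul, mul_smul]

theorem cyclicAverage_apply_of_fixed [CharZero K] {T : Module.End K M} {n : ℕ} (hn : n ≠ 0)
    {v : M} (hv : T v = v) : cyclicAverage T n v = v := by
  rw [cyclicAverage_apply_of_apply_eq_smul (ζ := 1) (by rw [one_smul, hv])]
  simp [hn]

theorem cyclicAverage_apply_eq_ite [CharZero K] {T : Module.End K M} {n : ℕ} (hn : n ≠ 0)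
    {ζ : K} (hζ : IsPrimitiveRoot ζ n) {m : ℕ} {v : M} (hv : T v = ζ ^ m • v) :
    cyclicAverage T n v = if n ∣ m then v else 0 := by
  split_ifs with hm
  · exact cyclicAverage_apply_of_fixed hn (by rw [hv, (hζ.pow_eq_one_iff_dvd m).2 hm, one_smul])
  · have hsum : ∑ i ∈ Finset.range n, (ζ ^ m) ^ i = 0 := by
      have hne : ζ ^ m - 1 ≠ 0 := sub_ne_zero.2 (mt (hζ.pow_eq_one_iff_dvd m).1 hm)
      have := geom_sum_mul (ζ ^ m) n
      rw [← pow_mul, mul_comm m n, pow_mul, hζ.pow_eq_one, one_pow, sub_self] at this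
      exact (mul_eq_zero.1 this).resolve_right hne
    rw [cyclicAverage_apply_of_apply_eq_smul hv, hsum, mul_zero, zero_smul]

theorem Commute.cyclicAverage_left {T L : Module.End K M} (h : Commute T L) (n : ℕ) :
    Commute (cyclicAverage T n) L :=
  (Commute.sum_left _ _ _ fun i _ => h.pow_left i).smul_left _

end CyclicAverage

def act (g : Matrix (Fin 2) (Fin 2) ℂ) : MvPolynomial (Fin 2) ℂ →ₐ[ℂ] MvPolynomial (Fin 2) ℂ :=
  aeval fun i => ∑ j, C (g i j) * X j

theorem act_apply (g : Matrix (Fin 2) (Fin 2) ℂ) (p : MvPolynomial (Fin 2) ℂ) :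
    act g p = actP g p := rfl

theorem act_X (g : Matrix (Fin 2) (Fin 2) ℂ) (i : Fin 2) :
    act g (X i) = C (g i 0) * X 0 + C (g i 1) * X 1 := by
  simp [act, Fin.sum_univ_two]

theorem act_C (g : Matrix (Fin 2) (Fin 2) ℂ) (c : ℂ) : act g (C c) = C c :=
  aeval_C _ _

theorem act_one : act 1 = AlgHom.id ℂ (MvPolynomial (Fin 2) ℂ) := by
  ext i : 1
  fin_cases i <;> simp [act_X]

theorem act_mul (g h : Matrix (Fin 2) (Fin 2) ℂ) : act (g * h) = (act h).comp (act g) := by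
  ext i : 1
  simp only [AlgHom.comp_apply, act_X, act_C, map_add, map_mul, Matrix.mul_apply,
    Fin.sum_univ_two]
  ring

theorem eval_act (g : Matrix (Fin 2) (Fin 2) ℂ) (c : Fin 2 → ℂ) (p : MvPolynomial (Fin 2) ℂ) :
    eval c (act g p) = eval (g *ᵥ c) p := by
  have h : (aeval c).comp (act g) = aeval (g *ᵥ c) := by
    ext i : 1
    fin_cases i <;> simp [act_X]
  exact DFunLike.congr_fun h p

theorem act_eq_of_eval {g : Matrix (Fin 2) (Fin 2) ℂ} {p q : MvPolynomial (Fin 2) ℂ}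
    (h : ∀ x y : ℂ, eval (g *ᵥ ![x, y]) p = eval ![x, y] q) : act g p = q := by
  refine MvPolynomial.funext fun c => ?_
  rw [eval_act, show c = ![c 0, c 1] from List.ofFn_inj.mp rfl]
  exact h _ _

theorem forall_mem_W24_iff {p : MvPolynomial (Fin 2) ℂ} :
    (∀ g ∈ W24, act g p = p) ↔ act iX p = p ∧ act iZ p = p ∧ act Qm p = p := by
  refine ⟨fun h => ⟨h _ (Submonoid.subset_closure (by simp)),
    h _ (Submonoid.subset_closure (by simp)), h _ (Submonoid.subset_closure (by simp))⟩, ?_⟩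
  rintro ⟨hX, hZ, hQ⟩ g hg
  induction hg using Submonoid.closure_induction with
  | mem g hg =>
    rcases hg with rfl | rfl | rfl
    exacts [hX, hZ, hQ]
  | one => rw [act_one, AlgHom.id_apply]
  | mul g h _ _ hg hh => rw [act_mul, AlgHom.comp_apply, hg, hh]

theorem mem_of_forall_monomial {R M : Type*} [CommSemiring R] [AddCommMonoid M] [Module R M]
    (f : MvPolynomial (Fin 2) R →ₗ[R] M) (S : Submodule R M)
    (h : ∀ a b : ℕ, f (X 0 ^ a * X 1 ^ b) ∈ S) (p : MvPolynomial (Fin 2) R) : f p ∈ S := by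
  induction p using MvPolynomial.induction_on' with
  | monomial u c =>
    rw [monomial_eq, Finsupp.prod_fintype _ _ (fun _ => pow_zero _), Fin.prod_univ_two,
      ← smul_eq_C_mul, map_smul]
    exact S.smul_mem c (h _ _)
  | add p q hp hq => rw [map_add]; exact S.add_mem hp hq

theorem act_iZ_monomial (a b : ℕ) :
    act iZ (X 0 ^ a * X 1 ^ b) = I ^ (a + 3 * b) • (X 0 ^ a * X 1 ^ b) := by
  apply act_eq_of_eval
  intro x y
  simp [iZ, pow_add, pow_mul, mul_pow]
  ring

theorem act_iX_monomial (a b : ℕ) :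
    act iX (X 0 ^ a * X 1 ^ b) = I ^ (a + b) • (X 0 ^ b * X 1 ^ a) := by
  apply act_eq_of_eval
  intro x y
  simp [iX, pow_add, mul_pow]
  ring

theorem act_iX_I6 : act iX I6 = I6 := by
  apply act_eq_of_eval; intro x y; simp [iX, I6]; grind [I_sq]

theorem act_iX_I8 : act iX I8 = I8 := by
  apply act_eq_of_eval; intro x y; simp [iX, I8]; grind [I_sq]

theorem act_iX_I12 : act iX I12 = I12 := by
  apply act_eq_of_eval; intro x y; simp [iX, I12]; grind [I_sq]

theorem act_iZ_I6 : act iZ I6 = I6 := by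
  apply act_eq_of_eval; intro x y; simp [iZ, I6]; grind [I_sq]

theorem act_iZ_I8 : act iZ I8 = I8 := by
  apply act_eq_of_eval; intro x y; simp [iZ, I8]; grind [I_sq]

theorem act_iZ_I12 : act iZ I12 = I12 := by
  apply act_eq_of_eval; intro x y; simp [iZ, I12]; grind [I_sq]

theorem act_Qm_I6 : act Qm I6 = I6 := by
  apply act_eq_of_eval; intro x y; simp [Qm, I6]; grind [I_sq]

theorem act_Qm_I8 : act Qm I8 = I8 := by
  apply act_eq_of_eval; intro x y; simp [Qm, I8]; grind [I_sq]

def quarticT : MvPolynomial (Fin 2) ℂ := X 0 ^ 4 + X 1 ^ 4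

def quarticU : MvPolynomial (Fin 2) ℂ := X 0 ^ 2 * X 1 ^ 2

def quarticAlgebra : Subalgebra ℂ (MvPolynomial (Fin 2) ℂ) :=
  Algebra.adjoin ℂ {quarticT, quarticU}

theorem quarticT_mem : quarticT ∈ quarticAlgebra := Algebra.subset_adjoin (by simp)

theorem quarticU_mem : quarticU ∈ quarticAlgebra := Algebra.subset_adjoin (by simp)

def q8Module : Submodule quarticAlgebra (MvPolynomial (Fin 2) ℂ) :=
  Submodule.span quarticAlgebra {1, I6}

theorem mul_mem_q8Module {r v : MvPolynomial (Fin 2) ℂ} (hr : r ∈ quarticAlgebra)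
    (hv : v ∈ q8Module) : r * v ∈ q8Module :=
  q8Module.smul_mem ⟨r, hr⟩ hv

theorem one_mem_q8Module : 1 ∈ q8Module := Submodule.subset_span (by simp)

theorem I6_mem_q8Module : I6 ∈ q8Module := Submodule.subset_span (by simp)

theorem Submodule.mem_of_linear_recurrence {K R : Type*} [CommSemiring K] [CommSemiring R]
    [Algebra K R] {S : Subalgebra K R} (N : Submodule S R) {a b : R} (ha : a ∈ S) (hb : b ∈ S)
    (s : ℕ → R) (h0 : s 0 ∈ N) (h1 : s 1 ∈ N) (hs : ∀ k, s (k + 2) = a * s (k + 1) + b * s k)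
    (k : ℕ) : s k ∈ N := by
  induction k using Nat.twoStepInduction with
  | zero => exact h0
  | one => exact h1
  | more k hk hk1 => rw [hs]; exact N.add_mem (N.smul_mem ⟨a, ha⟩ hk1) (N.smul_mem ⟨b, hb⟩ hk)

theorem monomial_add_swap_mem_q8Module_of_le (a k : ℕ) :
    X 0 ^ a * X 1 ^ (a + 4 * k) + (-1) ^ a * (X 0 ^ (a + 4 * k) * X 1 ^ a) ∈ q8Module := by
  have hrec := q8Module.mem_of_linear_recurrence quarticT_mem (neg_mem (pow_mem quarticU_mem 2))
  obtain ⟨e, rfl | rfl⟩ := Nat.even_or_odd' a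
  · have hsum : X 1 ^ (4 * k) + X 0 ^ (4 * k) ∈ q8Module := by
      refine hrec (fun k => X 1 ^ (4 * k) + X 0 ^ (4 * k)) ?_ ?_ (fun k => ?_) k
      · simpa [two_smul] using q8Module.add_mem one_mem_q8Module one_mem_q8Module
      · simpa [quarticT, add_comm] using mul_mem_q8Module quarticT_mem one_mem_q8Module
      · simp only [quarticT, quarticU]; ring
    convert mul_mem_q8Module (pow_mem quarticU_mem e) hsum using 1
    simp only [quarticU, pow_mul, neg_one_sq, one_pow]
    ring
  · have hdiff : X 0 * X 1 * (X 1 ^ (4 * k) - X 0 ^ (4 * k)) ∈ q8Module := by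
      refine hrec (fun k => X 0 * X 1 * (X 1 ^ (4 * k) - X 0 ^ (4 * k))) ?_ ?_ (fun k => ?_) k
      · simp
      · convert q8Module.neg_mem I6_mem_q8Module using 1
        simp only [I6]; ring
      · simp only [quarticT, quarticU]; ring
    convert mul_mem_q8Module (pow_mem quarticU_mem e) hdiff using 1
    simp only [quarticU, pow_succ, pow_mul]
    ring

theorem monomial_add_swap_mem_q8Module {a b : ℕ} (h : a ≡ b [MOD 4]) :
    X 0 ^ a * X 1 ^ b + (-1) ^ a * (X 0 ^ b * X 1 ^ a) ∈ q8Module := by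
  wlog hab : a ≤ b generalizing a b
  · have hsign : ((-1 : MvPolynomial (Fin 2) ℂ) ^ a) * (-1) ^ b = 1 := by
      rw [← pow_add, Even.neg_one_pow (Nat.even_iff.2 (by unfold Nat.ModEq at h; omega))]
    convert mul_mem_q8Module (r := (-1) ^ a) (pow_mem (neg_mem (one_mem _)) a)
      (this h.symm (le_of_not_ge hab)) using 1
    linear_combination (X 0 ^ a * X 1 ^ b) * hsign.symm
  obtain ⟨k, rfl⟩ : ∃ k, b = a + 4 * k := ⟨(b - a) / 4, by unfold Nat.ModEq at h; omega⟩
  exact monomial_add_swap_mem_q8Module_of_le a k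

theorem I_pow_add_of_modEq {a b : ℕ} (h : a ≡ b [MOD 4]) : I ^ (a + b) = (-1) ^ a := by
  rw [← I_sq, ← pow_mul, (isPrimitiveRoot_I.isOfFinOrder four_ne_zero).pow_inj_mod,
    ← isPrimitiveRoot_I.eq_orderOf]
  unfold Nat.ModEq at h
  omega

def q8Average : Module.End ℂ (MvPolynomial (Fin 2) ℂ) :=
  cyclicAverage (act iX).toLinearMap 2 * cyclicAverage (act iZ).toLinearMap 4

theorem q8Average_monomial_mem (a b : ℕ) :
    q8Average (X 0 ^ a * X 1 ^ b) ∈ q8Module.restrictScalars ℂ := by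
  rw [q8Average, Module.End.mul_apply, cyclicAverage_apply_eq_ite four_ne_zero isPrimitiveRoot_I
    (act_iZ_monomial a b)]
  split_ifs with h
  · have hab : a ≡ b [MOD 4] := by unfold Nat.ModEq; omega
    rw [cyclicAverage_apply]
    simp only [Finset.sum_range_succ, Finset.sum_range_zero, pow_zero, pow_one, zero_add,
      Module.End.one_apply, AlgHom.toLinearMap_apply, act_iX_monomial, I_pow_add_of_modEq hab]
    refine Submodule.smul_mem _ _ ?_
    rw [Submodule.restrictScalars_mem, smul_eq_C_mul, map_pow, map_neg, map_one]
    exact monomial_add_swap_mem_q8Module hab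
  · rw [map_zero]
    exact zero_mem _

theorem mem_q8Module_of_act_eq {p : MvPolynomial (Fin 2) ℂ} (hX : act iX p = p)
    (hZ : act iZ p = p) : p ∈ q8Module := by
  have hp : q8Average p = p := by
    rw [q8Average, Module.End.mul_apply, cyclicAverage_apply_of_fixed four_ne_zero hZ,
      cyclicAverage_apply_of_fixed two_ne_zero hX]
  rw [← hp]
  exact mem_of_forall_monomial q8Average (q8Module.restrictScalars ℂ) q8Average_monomial_mem p

def tetraForm (ω : ℂ) : MvPolynomial (Fin 2) ℂ := quarticT + C (4 * ω + 2) * quarticU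

section TetraForm

variable {ω : ℂ}

theorem act_Qm_tetraForm (h : ω ^ 2 + ω + 1 = 0) : act Qm (tetraForm ω) = ω • tetraForm ω := by
  apply act_eq_of_eval; intro x y; simp [Qm, tetraForm, quarticT, quarticU]; grind [I_sq]

theorem tetraForm_pow_three (h : ω ^ 2 + ω + 1 = 0) :
    tetraForm ω ^ 3 = I12 + C (6 * (2 * ω + 1)) * I6 ^ 2 := by
  refine MvPolynomial.funext fun c => ?_
  simp [tetraForm, quarticT, quarticU, I6, I12]
  grind

theorem tetraForm_mul_tetraForm_sq (h : ω ^ 2 + ω + 1 = 0) :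
    tetraForm ω * tetraForm (ω ^ 2) = I8 := by
  refine MvPolynomial.funext fun c => ?_
  simp [tetraForm, quarticT, quarticU, I8]
  grind

theorem IsPrimitiveRoot.sq_add_self_add_one {R : Type*} [CommRing R] [IsDomain R] {ζ : R}
    (hζ : IsPrimitiveRoot ζ 3) : ζ ^ 2 + ζ + 1 = 0 := by
  have h := hζ.geom_sum_eq_zero (by norm_num)
  simp only [Finset.sum_range_succ, Finset.sum_range_zero] at h
  linear_combination h

variable (hω : IsPrimitiveRoot ω 3)
include hω

theorem quarticAlgebra_le_adjoin_tetraForm :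
    quarticAlgebra ≤ Algebra.adjoin ℂ {tetraForm ω, tetraForm (ω ^ 2)} := by
  have hP : tetraForm ω ∈ Algebra.adjoin ℂ {tetraForm ω, tetraForm (ω ^ 2)} :=
    Algebra.subset_adjoin (by simp)
  have hP' : tetraForm (ω ^ 2) ∈ Algebra.adjoin ℂ {tetraForm ω, tetraForm (ω ^ 2)} :=
    Algebra.subset_adjoin (by simp)
  have h := hω.sq_add_self_add_one
  have hne : ω - ω ^ 2 ≠ 0 := by
    intro h0
    have : ω * (1 - ω) = 0 := by linear_combination h0
    rcases mul_eq_zero.1 this with h1 | h1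
    · exact hω.ne_zero (by norm_num) h1
    · exact hω.ne_one (by norm_num) (by linear_combination -h1)
  apply Algebra.adjoin_le
  rintro _ (rfl | rfl)
  · have e : quarticT = (2⁻¹ : ℂ) • (tetraForm ω + tetraForm (ω ^ 2)) := by
      refine MvPolynomial.funext fun c => ?_
      simp [tetraForm, quarticT, quarticU]
      grind
    rw [SetLike.mem_coe, e]
    exact Subalgebra.smul_mem _ (add_mem hP hP') _
  · have e : quarticU = (4 * (ω - ω ^ 2))⁻¹ • (tetraForm ω - tetraForm (ω ^ 2)) := by
      refine MvPolynomial.funext fun c => ?_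
      simp [tetraForm, quarticT, quarticU]
      grind
    rw [SetLike.mem_coe, e]
    exact Subalgebra.smul_mem _ (sub_mem hP hP') _

theorem tetraForm_pow_mul_pow_mem {j k : ℕ} (hjk : j ≡ k [MOD 3]) :
    tetraForm ω ^ j * tetraForm (ω ^ 2) ^ k ∈ Algebra.adjoin ℂ {I6, I8, I12} := by
  have h := hω.sq_add_self_add_one
  have h' : (ω ^ 2) ^ 2 + ω ^ 2 + 1 = 0 := by
    linear_combination (ω ^ 2 - ω + 1) * h
  have cube_mem : ∀ {ζ : ℂ}, ζ ^ 2 + ζ + 1 = 0 →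
      tetraForm ζ ^ 3 ∈ Algebra.adjoin ℂ ({I6, I8, I12} : Set (MvPolynomial (Fin 2) ℂ)) := by
    intro ζ hζ
    rw [tetraForm_pow_three hζ]
    exact add_mem (Algebra.subset_adjoin (by simp))
      (mul_mem (Subalgebra.algebraMap_mem _ _) (pow_mem (Algebra.subset_adjoin (by simp)) 2))
  have hprod : tetraForm ω * tetraForm (ω ^ 2) ∈ Algebra.adjoin ℂ ({I6, I8, I12} : Set _) := by
    rw [tetraForm_mul_tetraForm_sq h]
    exact Algebra.subset_adjoin (by simp)
  have e : tetraForm ω ^ j * tetraForm (ω ^ 2) ^ k = (tetraForm ω ^ 3) ^ (j / 3) *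
      (tetraForm (ω ^ 2) ^ 3) ^ (k / 3) * (tetraForm ω * tetraForm (ω ^ 2)) ^ (j % 3) := by
    rw [mul_pow, ← pow_mul, ← pow_mul]
    conv_lhs => rw [← Nat.div_add_mod j 3, ← Nat.div_add_mod k 3]
    rw [show j % 3 = k % 3 from hjk]
    ring
  rw [e]
  exact mul_mem (mul_mem (pow_mem (cube_mem h) _) (pow_mem (cube_mem h') _)) (pow_mem hprod _)

theorem act_Qm_tetraForm_pow_mul_pow (j k : ℕ) :
    act Qm (tetraForm ω ^ j * tetraForm (ω ^ 2) ^ k) =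
      ω ^ (j + 2 * k) • (tetraForm ω ^ j * tetraForm (ω ^ 2) ^ k) := by
  have h := hω.sq_add_self_add_one
  have h' : (ω ^ 2) ^ 2 + ω ^ 2 + 1 = 0 := by
    linear_combination (ω ^ 2 - ω + 1) * h
  rw [map_mul, map_pow, map_pow, act_Qm_tetraForm h, act_Qm_tetraForm h', smul_pow, smul_pow,
    smul_mul_smul_comm, ← pow_mul, ← pow_add]

theorem cyclicAverage_Qm_mem {q : MvPolynomial (Fin 2) ℂ} (hq : q ∈ quarticAlgebra) :
    cyclicAverage (act Qm).toLinearMap 3 q ∈ Algebra.adjoin ℂ {I6, I8, I12} := by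
  have hq' : q ∈ (aeval (R := ℂ) ![tetraForm ω, tetraForm (ω ^ 2)]).range := by
    rw [← Algebra.adjoin_range_eq_range_aeval, Matrix.range_cons, Matrix.range_cons,
      Matrix.range_empty, Set.union_empty, Set.singleton_union]
    exact quarticAlgebra_le_adjoin_tetraForm hω hq
  obtain ⟨r, rfl⟩ := (AlgHom.mem_range _).1 hq'
  have key := mem_of_forall_monomial (cyclicAverage (act Qm).toLinearMap 3 ∘ₗ
    (aeval (R := ℂ) ![tetraForm ω, tetraForm (ω ^ 2)]).toLinearMap)
    (Subalgebra.toSubmodule (Algebra.adjoin ℂ {I6, I8, I12})) ?_ r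
  · simpa only [LinearMap.comp_apply, AlgHom.toLinearMap_apply, Subalgebra.mem_toSubmodule]
      using key
  intro j k
  rw [LinearMap.comp_apply, AlgHom.toLinearMap_apply, map_mul, map_pow, map_pow, aeval_X, aeval_X,
    cyclicAverage_apply_eq_ite three_ne_zero hω (act_Qm_tetraForm_pow_mul_pow hω j k)]
  split_ifs with h3
  · exact tetraForm_pow_mul_pow_mem hω (by unfold Nat.ModEq; omega)
  · exact zero_mem _

end TetraForm

theorem mem_adjoin_of_mem_q8Module {p : MvPolynomial (Fin 2) ℂ} (hp : p ∈ q8Module)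
    (hQ : act Qm p = p) : p ∈ Algebra.adjoin ℂ {I6, I8, I12} := by
  have hω := isPrimitiveRoot_exp 3 three_ne_zero
  obtain ⟨a, b, rfl⟩ := Submodule.mem_span_pair.1 hp
  have hI6 : Commute (act Qm).toLinearMap (LinearMap.mulLeft ℂ I6) :=
    LinearMap.ext fun q => by simp [act_Qm_I6]
  rw [← cyclicAverage_apply_of_fixed three_ne_zero (T := (act Qm).toLinearMap) hQ]
  have hb : cyclicAverage (act Qm).toLinearMap 3 (I6 * b) =
      I6 * cyclicAverage (act Qm).toLinearMap 3 b :=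
    LinearMap.congr_fun (hI6.cyclicAverage_left 3).eq b
  simp only [Subalgebra.smul_def, smul_eq_mul, mul_one, map_add, mul_comm _ I6, hb]
  exact add_mem (cyclicAverage_Qm_mem hω a.2)
    (mul_mem (Algebra.subset_adjoin (by simp)) (cyclicAverage_Qm_mem hω b.2))

theorem act_Qm_I12 : act Qm I12 = I12 := by
  obtain ⟨ω, hω⟩ : ∃ ω : ℂ, IsPrimitiveRoot ω 3 := ⟨_, isPrimitiveRoot_exp 3 three_ne_zero⟩
  have h := hω.sq_add_self_add_one
  have e : I12 = tetraForm ω ^ 3 - C (6 * (2 * ω + 1)) * I6 ^ 2 := by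
    rw [tetraForm_pow_three h]; ring
  rw [e, map_sub, map_mul, map_pow, map_pow, act_Qm_tetraForm h, act_C, act_Qm_I6, smul_pow,
    hω.pow_eq_one, one_smul]

theorem act_eq_self_of_mem_adjoin {g : Matrix (Fin 2) (Fin 2) ℂ} (h6 : act g I6 = I6)
    (h8 : act g I8 = I8) (h12 : act g I12 = I12) {p : MvPolynomial (Fin 2) ℂ}
    (hp : p ∈ Algebra.adjoin ℂ {I6, I8, I12}) : act g p = p := by
  have hle : Algebra.adjoin ℂ {I6, I8, I12} ≤ (act g).equalizer (AlgHom.id ℂ _) := by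
    rw [Algebra.adjoin_le_iff, Set.insert_subset_iff, Set.insert_subset_iff,
      Set.singleton_subset_iff]
    exact ⟨h6, h8, h12⟩
  exact hle hp

/-- The algebra of polynomials in `x, y` invariant under the binary tetrahedral group is
generated by `I₆ = x⁵y − xy⁵`, `I₈ = x⁸ + 14x⁴y⁴ + y⁸`, `I₁₂ = x¹² − 33x⁸y⁴ − 33x⁴y⁸ + y¹²`. -/
theorem stmt_16 (p : MvPolynomial (Fin 2) ℂ) :
    (∀ g ∈ W24, actP g p = p) ↔
      p ∈ Algebra.adjoin ℂ ({I6, I8, I12} : Set (MvPolynomial (Fin 2) ℂ)) := by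
  simp only [← act_apply]
  rw [forall_mem_W24_iff]
  constructor
  · rintro ⟨hX, hZ, hQ⟩
    exact mem_adjoin_of_mem_q8Module (mem_q8Module_of_act_eq hX hZ) hQ
  · intro hp
    exact ⟨act_eq_self_of_mem_adjoin act_iX_I6 act_iX_I8 act_iX_I12 hp,
      act_eq_self_of_mem_adjoin act_iZ_I6 act_iZ_I8 act_iZ_I12 hp,
      act_eq_self_of_mem_adjoin act_Qm_I6 act_Qm_I8 act_Qm_I12 hp⟩
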